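/- arXiv:2403.14942 — 5 statements merged into one kernel-verified Lean document; each statement's English description precedes it below -/
import Mathlib

section
/- Let a ∈ ℂ and b ∈ ℂ ∖ ℤ_{≤0}. Then there exists a constant C > 0 such that |(a)_n / (b)_n| ≤ C · n^{Re(a−b)} for every integer n ≥ 1. -/
/-!
Euler's limit formula `Γ(s) = lim n^s n! / (s)_{n+1}` gives
`(a)_n / (b)_n / n^(a-b) → Γ(b) / Γ(a)`, and a convergent sequence is bounded.
When `a = -m` the ratio vanishes for `n > m`, which matches `1 / Γ(-m) = 0`
(Mathlib's `Γ(-m) = 0` and `x / 0 = 0` give the same limit).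
-/

noncomputable def poch (a : ℂ) (n : ℕ) : ℂ := ∏ i ∈ Finset.range n, (a + i)

open Filter Topology

lemma poch_succ (a : ℂ) (n : ℕ) : poch a (n + 1) = poch a n * (a + n) :=
  Finset.prod_range_succ _ _

lemma poch_ne_zero {a : ℂ} (ha : ∀ m : ℕ, a ≠ -(m : ℂ)) (n : ℕ) : poch a n ≠ 0 := by
  rw [poch, Finset.prod_ne_zero_iff]
  intro i _ h
  exact ha i (by linear_combination h)

lemma poch_neg_natCast_eq_zero {m n : ℕ} (h : m < n) : poch (-m) n = 0 :=
  Finset.prod_eq_zero (Finset.mem_range.2 h) (neg_add_cancel _)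

lemma Complex.GammaSeq_eq_poch (s : ℂ) (n : ℕ) :
    GammaSeq s n = (n : ℂ) ^ s * n.factorial / poch s (n + 1) := rfl

lemma poch_div_poch_div_cpow_eq {a b : ℂ} (ha : ∀ m : ℕ, a ≠ -(m : ℂ))
    (hb : ∀ m : ℕ, b ≠ -(m : ℂ)) {n : ℕ} (hn : n ≠ 0) :
    poch a n / poch b n / (n : ℂ) ^ (a - b) =
      Complex.GammaSeq b n / Complex.GammaSeq a n * ((b + n) / (a + n)) := by
  have hn' : (n : ℂ) ≠ 0 := Nat.cast_ne_zero.2 hn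
  have hpa := poch_ne_zero ha (n + 1)
  have hpb := poch_ne_zero hb (n + 1)
  rw [poch_succ, mul_ne_zero_iff] at hpa hpb
  have hna : (n : ℂ) ^ a ≠ 0 := by simp [Complex.cpow_eq_zero_iff, hn']
  have hnb : (n : ℂ) ^ b ≠ 0 := by simp [Complex.cpow_eq_zero_iff, hn']
  have hfac : (n.factorial : ℂ) ≠ 0 := Nat.cast_ne_zero.2 n.factorial_ne_zero
  rw [Complex.GammaSeq_eq_poch, Complex.GammaSeq_eq_poch, poch_succ, poch_succ,
    Complex.cpow_sub _ _ hn']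
  field_simp [hpa.1, hpa.2, hpb.1, hpb.2]

lemma tendsto_add_natCast_div_add_natCast (a b : ℂ) :
    Tendsto (fun n : ℕ ↦ (b + n) / (a + n)) atTop (𝓝 1) := by
  simpa using tendsto_add_mul_div_add_mul_atTop_nhds b a 1 one_ne_zero

theorem tendsto_poch_div_poch_div_cpow (a : ℂ) {b : ℂ} (hb : ∀ m : ℕ, b ≠ -(m : ℂ)) :
    Tendsto (fun n : ℕ ↦ poch a n / poch b n / (n : ℂ) ^ (a - b)) atTop
      (𝓝 (Complex.Gamma b / Complex.Gamma a)) := by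
  by_cases ha : ∃ m : ℕ, a = -(m : ℂ)
  · obtain ⟨m, rfl⟩ := ha
    rw [Complex.Gamma_neg_nat_eq_zero, div_zero]
    refine tendsto_const_nhds.congr' ?_
    filter_upwards [eventually_gt_atTop m] with n hn
    rw [poch_neg_natCast_eq_zero hn, zero_div, zero_div]
  · push Not at ha
    have hlim := ((Complex.GammaSeq_tendsto_Gamma b).div (Complex.GammaSeq_tendsto_Gamma a)
      (Complex.Gamma_ne_zero ha)).mul (tendsto_add_natCast_div_add_natCast a b)
    rw [mul_one] at hlim
    refine hlim.congr' ?_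
    filter_upwards [eventually_ne_atTop 0] with n hn
    exact (poch_div_poch_div_cpow_eq ha hb hn).symm

/-- Lemma 1: sharp bound for the ratio of Pochhammer symbols. -/
theorem pochhammer_ratio_bound (a b : ℂ) (hb : ∀ m : ℕ, b ≠ -(m : ℂ)) :
    ∃ C > (0 : ℝ), ∀ n : ℕ, 1 ≤ n →
      ‖poch a n / poch b n‖ ≤ C * (n : ℝ) ^ (a - b).re := by
  obtain ⟨B, hB⟩ := (tendsto_poch_div_poch_div_cpow a hb).norm.bddAbove_range
  refine ⟨max B 1, by positivity, fun n hn ↦ ?_⟩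
  have hcpow : (n : ℂ) ^ (a - b) ≠ 0 := by
    simp [Complex.cpow_eq_zero_iff, Nat.one_le_iff_ne_zero.1 hn]
  calc ‖poch a n / poch b n‖
      = ‖poch a n / poch b n / (n : ℂ) ^ (a - b)‖ * ‖(n : ℂ) ^ (a - b)‖ := by
        rw [← norm_mul, div_mul_cancel₀ _ hcpow]
    _ ≤ max B 1 * (n : ℝ) ^ (a - b).re := by
        rw [Complex.norm_natCast_cpow_of_pos hn]
        gcongr
        exact le_max_of_le_left (hB ⟨n, rfl⟩)
end

section
/- For every a ∈ ℝ there exists a constant K > 0, independent of x, such that Φ_a(x) ≤ K · x^a e^x for all real x ≥ 1. -/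
/-!
Write `k^a = x^a (k/x)^a` and split `(k/x)^a ≤ (k/x)^n + (x/k)^n` with `n = ⌈|a|⌉`.
Since `y^n/n! ≤ e^y` at `y = k/(2x)` and `e^{1/(2x)} ≤ 1 + 1/x`, one has
`(k/x)^n ≤ n! 2^n (1 + 1/x)^k`, so the first part contributes at most
`n! 2^n Σ (x+1)^k/k! ≤ n! 2^n e^{x+1}`. For the second, `(k+n)! ≤ k! k^n (n+1)^n` bounds
`(x/k)^n x^k/k!` by `(n+1)^n x^{k+n}/(k+n)!`, a tail of the series of `e^x`.
-/

/-- The "horizontal" generating function of Stirling numbers of real order: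
`Φ_a(x) = Σ_{k=1}^∞ (k^a / k!) x^k`. -/
noncomputable def Phi (a x : ℝ) : ℝ :=
  ∑' k : ℕ, ((k + 1 : ℝ)) ^ a / (Nat.factorial (k + 1)) * x ^ (k + 1)

open Real
open scoped Nat

theorem Nat.factorial_add_le_factorial_mul_pow_mul_pow {m : ℕ} (hm : 1 ≤ m) (n : ℕ) :
    (m + n)! ≤ m ! * m ^ n * (n + 1) ^ n := by
  rw [← Nat.factorial_mul_ascFactorial, mul_assoc, ← mul_pow]
  gcongr
  calc (m + 1).ascFactorial n ≤ (m + n) ^ n := Nat.ascFactorial_le_pow_add m n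
    _ ≤ (m * (n + 1)) ^ n := by gcongr; nlinarith

theorem Real.rpow_le_pow_add_inv_pow {t a : ℝ} (ht : 0 < t) {n : ℕ} (hn : |a| ≤ n) :
    t ^ a ≤ t ^ n + t⁻¹ ^ n := by
  rcases le_total 1 t with h1 | h1
  · calc t ^ a ≤ t ^ (n : ℝ) := rpow_le_rpow_of_exponent_le h1 ((le_abs_self a).trans hn)
      _ ≤ t ^ n + t⁻¹ ^ n := by rw [rpow_natCast]; linarith [pow_nonneg (inv_nonneg.2 ht.le) n]
  · calc t ^ a ≤ t ^ (-(n : ℝ)) := rpow_le_rpow_of_exponent_ge ht h1 (by linarith [neg_abs_le a])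
      _ ≤ t ^ n + t⁻¹ ^ n := by
        rw [rpow_neg ht.le, rpow_natCast, inv_pow]; linarith [pow_nonneg ht.le n]

theorem Real.exp_half_le_one_add {ε : ℝ} (h0 : 0 ≤ ε) (h1 : ε ≤ 1) : exp (ε / 2) ≤ 1 + ε :=
  calc exp (ε / 2) ≤ 1 / (1 - ε / 2) := exp_bound_div_one_sub_of_interval (by linarith) (by linarith)
    _ ≤ 1 + ε := by rw [div_le_iff₀ (by linarith)]; nlinarith

theorem natCast_pow_le_factorial_mul_div_pow_mul_one_add_pow {ε : ℝ} (hε0 : 0 < ε) (hε1 : ε ≤ 1)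
    (n k : ℕ) :
    (k : ℝ) ^ n ≤ n ! * (2 / ε) ^ n * (1 + ε) ^ k := by
  have h : (k * (ε / 2)) ^ n / n ! ≤ (1 + ε) ^ k := calc
    _ ≤ exp (k * (ε / 2)) := pow_div_factorial_le_exp _ (by positivity) n
    _ = exp (ε / 2) ^ k := exp_nat_mul _ k
    _ ≤ (1 + ε) ^ k := by gcongr; exact exp_half_le_one_add hε0.le hε1
  rw [div_le_iff₀ (by positivity)] at h
  calc (k : ℝ) ^ n = (k * (ε / 2)) ^ n * (2 / ε) ^ n := by rw [← mul_pow]; field_simp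
    _ ≤ (1 + ε) ^ k * n ! * (2 / ε) ^ n := by gcongr
    _ = _ := by ring

theorem div_pow_mul_pow_div_factorial_le_add_one_pow_div_factorial {x : ℝ} (hx : 1 ≤ x)
    (m n : ℕ) :
    (m / x) ^ n * (x ^ m / m !) ≤ n ! * 2 ^ n * ((x + 1) ^ m / m !) := by
  have hx0 : 0 < x := by linarith
  have h := natCast_pow_le_factorial_mul_div_pow_mul_one_add_pow (one_div_pos.2 hx0)
    ((div_le_one hx0).2 hx) n m
  calc (m / x) ^ n * (x ^ m / m !) = (m : ℝ) ^ n * x ^ m / (x ^ n * m !) := by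
        rw [div_pow]; field_simp
    _ ≤ n ! * (2 / (1 / x)) ^ n * (1 + 1 / x) ^ m * x ^ m / (x ^ n * m !) := by gcongr
    _ = n ! * 2 ^ n * ((x + 1) ^ m / m !) := by
        have hx1 : (1 + 1 / x) * x = x + 1 := by field_simp
        rw [← hx1, mul_pow (1 + 1 / x), div_div_eq_mul_div, div_one, mul_pow 2 x]
        field_simp

theorem div_pow_mul_pow_div_factorial_le_pow_add_div_factorial {x : ℝ} (hx : 0 ≤ x) {m : ℕ}
    (hm : 1 ≤ m) (n : ℕ) :
    (x / m) ^ n * (x ^ m / m !) ≤ (n + 1) ^ n * (x ^ (m + n) / (m + n)!) := by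
  have hfact : ((m + n)! : ℝ) ≤ (n + 1) ^ n * (m ^ n * m !) := by
    calc ((m + n)! : ℝ) ≤ (m ! * m ^ n * (n + 1) ^ n : ℕ) := by
          exact_mod_cast Nat.factorial_add_le_factorial_mul_pow_mul_pow hm n
      _ = (n + 1) ^ n * (m ^ n * m !) := by push_cast; ring
  calc (x / m) ^ n * (x ^ m / m !) = x ^ (m + n) / (m ^ n * m !) := by
        rw [div_pow, pow_add]; field_simp
    _ ≤ x ^ (m + n) / ((m + n)! / (n + 1) ^ n) := by
        gcongr
        rw [div_le_iff₀ (by positivity)]; linarith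
    _ = (n + 1) ^ n * (x ^ (m + n) / (m + n)!) := by field_simp

theorem natCast_rpow_div_factorial_mul_pow_le {x a : ℝ} (hx : 1 ≤ x) {n : ℕ} (hn : |a| ≤ n)
    {m : ℕ} (hm : 1 ≤ m) :
    (m : ℝ) ^ a / m ! * x ^ m ≤
      x ^ a * (n ! * 2 ^ n * ((x + 1) ^ m / m !) + (n + 1) ^ n * (x ^ (m + n) / (m + n)!)) := by
  have hx0 : 0 < x := by linarith
  have hm0 : (0 : ℝ) < m := by exact_mod_cast hm
  have hsplit : (m : ℝ) ^ a = x ^ a * (m / x) ^ a := by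
    rw [← mul_rpow hx0.le (by positivity), mul_div_cancel₀ _ hx0.ne']
  calc (m : ℝ) ^ a / m ! * x ^ m = x ^ a * ((m / x) ^ a * (x ^ m / m !)) := by rw [hsplit]; ring
    _ ≤ x ^ a * (((m / x) ^ n + (m / x)⁻¹ ^ n) * (x ^ m / m !)) := by
        gcongr; exact rpow_le_pow_add_inv_pow (by positivity) hn
    _ ≤ _ := by
        rw [inv_div, add_mul]
        exact mul_le_mul_of_nonneg_left
          (add_le_add (div_pow_mul_pow_div_factorial_le_add_one_pow_div_factorial hx m n)
            (div_pow_mul_pow_div_factorial_le_pow_add_div_factorial hx0.le hm n)) (by positivity)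

theorem Real.tsum_pow_div_factorial_nat_add_le_exp {y : ℝ} (hy : 0 ≤ y) (c : ℕ) :
    ∑' k : ℕ, y ^ (k + c) / (k + c)! ≤ exp y := by
  rw [show exp y = ∑' i : ℕ, y ^ i / (i ! : ℝ) by rw [exp_eq_exp_ℝ, NormedSpace.exp_eq_tsum_div],
    ← (summable_pow_div_factorial y).sum_add_tsum_nat_add c]
  exact le_add_of_nonneg_left (Finset.sum_nonneg fun i _ => by positivity)

theorem Phi_le {a x : ℝ} (hx : 1 ≤ x) {n : ℕ} (hn : |a| ≤ n) :
    Phi a x ≤ x ^ a * (n ! * 2 ^ n * exp (x + 1) + (n + 1) ^ n * exp x) := by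
  have hg : Summable fun k : ℕ => (x + 1) ^ (k + 1) / (k + 1)! :=
    (summable_nat_add_iff 1).2 (summable_pow_div_factorial _)
  have hh : Summable fun k : ℕ => x ^ (k + 1 + n) / (k + 1 + n)! := by
    simpa only [add_assoc] using (summable_nat_add_iff (1 + n)).2 (summable_pow_div_factorial x)
  have hG :=
    ((hg.mul_left ((n ! : ℝ) * 2 ^ n)).add (hh.mul_left (((n : ℝ) + 1) ^ n))).mul_left (x ^ a)
  have hterm (k : ℕ) := natCast_rpow_div_factorial_mul_pow_le hx hn (Nat.le_add_left 1 k)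
  push_cast at hterm
  have hPhi : Summable fun k : ℕ => ((k + 1 : ℝ)) ^ a / (k + 1)! * x ^ (k + 1) :=
    hG.of_nonneg_of_le (fun k => by positivity) hterm
  calc Phi a x ≤ _ := hPhi.tsum_le_tsum hterm hG
    _ = x ^ a * (n ! * 2 ^ n * ∑' k : ℕ, (x + 1) ^ (k + 1) / (k + 1)!
          + (n + 1) ^ n * ∑' k : ℕ, x ^ (k + 1 + n) / (k + 1 + n)!) := by
        rw [tsum_mul_left, (hg.mul_left _).tsum_add (hh.mul_left _), tsum_mul_left, tsum_mul_left]
    _ ≤ _ := by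
        gcongr
        · exact tsum_pow_div_factorial_nat_add_le_exp (by linarith) 1
        · simpa only [add_assoc] using tsum_pow_div_factorial_nat_add_le_exp (by linarith) (1 + n)

/-- Lemma 2 (bound): there is `K > 0` with `Φ_a(x) ≤ K x^a e^x` for all `x ≥ 1`. -/
theorem Phi_bound (a : ℝ) :
    ∃ K > (0 : ℝ), ∀ x : ℝ, 1 ≤ x → Phi a x ≤ K * x ^ a * Real.exp x := by
  set n := ⌈|a|⌉₊
  refine ⟨n ! * 2 ^ n * exp 1 + (n + 1) ^ n, by positivity, fun x hx => ?_⟩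
  calc Phi a x ≤ x ^ a * (n ! * 2 ^ n * exp (x + 1) + (n + 1) ^ n * exp x) :=
        Phi_le hx (Nat.le_ceil _)
    _ = _ := by rw [exp_add]; ring
end

section
/- Let a, c ∈ ℂ and choose N ∈ ℤ_{>0} such that Re(c + N + 1) > 0. Define G_ℓ(z) := ₁F₁[a+ℓ; c+ℓ; z] for ℓ ∈ ℤ_{≥0} (note Re(c+ℓ) > 0 for ℓ ≥ N+1, so G_ℓ is well defined there). Then there exist constants C > 0 and γ > 0, independent of ℓ, N and z, such that |G_ℓ(z)| ≤ C e^{γ|z|} for all integers ℓ ≥ N+1 and all z ∈ ℂ. -/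
/-- The confluent hypergeometric function `₁F₁[a; b; z]`. -/
noncomputable def F11 (a b z : ℂ) : ℂ :=
  ∑' n : ℕ, poch a n / poch b n * z ^ n / Nat.factorial n

theorem exists_pos_le_add_natCast (x : ℝ) :
    ∃ δ > 0, ∀ k : ℕ, 0 < x + k → δ ≤ x + k := by
  have hex : ∃ m : ℕ, 0 < x + m := by
    obtain ⟨m, hm⟩ := exists_nat_gt (-x)
    exact ⟨m, by linarith⟩
  refine ⟨x + Nat.find hex, Nat.find_spec hex, fun k hk => ?_⟩
  have : (Nat.find hex : ℝ) ≤ k := by exact_mod_cast Nat.find_min' hex hk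
  linarith

theorem norm_add_le_mul_norm_of_le_norm {E : Type*} [SeminormedAddCommGroup E] {w : E}
    (d : E) {δ : ℝ} (hδ : 0 < δ) (hw : δ ≤ ‖w‖) :
    ‖w + d‖ ≤ (1 + ‖d‖ / δ) * ‖w‖ := by
  have hd : ‖d‖ ≤ ‖d‖ / δ * ‖w‖ := by
    calc ‖d‖ = ‖d‖ / δ * δ := (div_mul_cancel₀ _ hδ.ne').symm
      _ ≤ ‖d‖ / δ * ‖w‖ := by gcongr
  calc ‖w + d‖ ≤ ‖w‖ + ‖d‖ := norm_add_le _ _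
    _ ≤ (1 + ‖d‖ / δ) * ‖w‖ := by linarith

theorem norm_poch_le_pow_mul {a b : ℂ} {M : ℝ} (h : ∀ i : ℕ, ‖a + i‖ ≤ M * ‖b + i‖) (n : ℕ) :
    ‖poch a n‖ ≤ M ^ n * ‖poch b n‖ := by
  rw [poch, poch, norm_prod, norm_prod]
  calc ∏ i ∈ Finset.range n, ‖a + i‖ ≤ ∏ i ∈ Finset.range n, M * ‖b + i‖ :=
        Finset.prod_le_prod (fun i _ => norm_nonneg _) (fun i _ => h i)
    _ = M ^ n * ∏ i ∈ Finset.range n, ‖b + i‖ := by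
        rw [Finset.prod_mul_distrib, Finset.prod_const, Finset.card_range]

theorem norm_poch_div_poch_le_pow {a b : ℂ} {M : ℝ} (hM : 0 ≤ M)
    (h : ∀ i : ℕ, ‖a + i‖ ≤ M * ‖b + i‖) (n : ℕ) :
    ‖poch a n / poch b n‖ ≤ M ^ n := by
  rcases eq_or_ne (poch b n) 0 with hb | hb
  · simpa [hb] using pow_nonneg hM n
  · rw [norm_div, div_le_iff₀ (norm_pos_iff.mpr hb)]
    exact norm_poch_le_pow_mul h n

theorem norm_F11_le_exp {a b : ℂ} {M : ℝ} (hM : 0 ≤ M)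
    (h : ∀ i : ℕ, ‖a + i‖ ≤ M * ‖b + i‖) (z : ℂ) :
    ‖F11 a b z‖ ≤ Real.exp (M * ‖z‖) := by
  have hexp : HasSum (fun n : ℕ => (M * ‖z‖) ^ n / n.factorial) (Real.exp (M * ‖z‖)) := by
    rw [Real.exp_eq_exp_ℝ]
    exact NormedSpace.expSeries_div_hasSum_exp (M * ‖z‖)
  refine tsum_of_norm_bounded hexp fun n => ?_
  rw [norm_div, norm_mul, norm_pow, Complex.norm_natCast, mul_pow]
  gcongr
  exact norm_poch_div_poch_le_pow hM h n

/-- Lemma 3: a global estimate for `G_ℓ(z) = ₁F₁[a+ℓ; c+ℓ; z]`, with constants `C, γ`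
independent of `ℓ`, `N` and `z`. -/
theorem G_ell_bound (a c : ℂ) :
    ∃ C > (0 : ℝ), ∃ γ > (0 : ℝ), ∀ N : ℕ, 0 < N → 0 < (c + N + 1).re →
      ∀ ℓ : ℕ, N + 1 ≤ ℓ → ∀ z : ℂ,
        ‖F11 (a + ℓ) (c + ℓ) z‖ ≤ C * Real.exp (γ * ‖z‖) := by
  obtain ⟨δ, hδ, hδle⟩ := exists_pos_le_add_natCast c.re
  set M := 1 + ‖a - c‖ / δ
  have hM : 1 ≤ M := le_add_of_nonneg_right (by positivity)
  refine ⟨1, one_pos, M, by linarith, fun N _ hre ℓ hℓ z => ?_⟩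
  have hfactor : ∀ i : ℕ, ‖a + ℓ + i‖ ≤ M * ‖c + ℓ + i‖ := by
    intro i
    have hre' : 0 < c.re + ↑(ℓ + i) := by
      have : (N : ℝ) + 1 ≤ ℓ := by exact_mod_cast hℓ
      simp only [Complex.add_re, Complex.natCast_re, Complex.one_re] at hre
      push_cast
      linarith [(Nat.cast_nonneg i : (0 : ℝ) ≤ i)]
    have hnorm : δ ≤ ‖c + ℓ + i‖ := by
      refine (hδle _ hre').trans (le_of_eq_of_le ?_ (Complex.re_le_norm _))
      simp [add_assoc]
    have hsplit : a + ℓ + i = (c + ℓ + i) + (a - c) := by ring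
    rw [hsplit]
    exact norm_add_le_mul_norm_of_le_norm (a - c) hδ hnorm
  rw [one_mul]
  exact norm_F11_le_exp (by linarith) hfactor z
end

section
/- Let a, b, c, d ∈ ℂ with c ∉ ℤ_{≤0}, d ∉ ℤ and b − d ∉ ℤ_{≥0}, let z ∈ ℂ with z ≠ 0 be fixed, and let N be a positive integer. Then ₂F₂[a, b−n; c, d−n; z] = Σ_{k=0}^{N−1} ((a)_k (d−b)_k)/((c)_k (d−n)_k) · (−z)^k/k! · ₁F₁[a+k; c+k; z] + O(n^{−N}) as n → +∞ through positive integer values; i.e., there exist C > 0 and n₀ ∈ ℕ such that for all integers n ≥ n₀, the difference between the left-hand side and the finite sum is bounded in modulus by C n^{−N}. -/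
/-- The generalized hypergeometric function `₂F₂[a₁, a₂; b₁, b₂; z]`. -/
noncomputable def F22 (a1 a2 b1 b2 z : ℂ) : ℂ :=
  ∑' n : ℕ, poch a1 n * poch a2 n / (poch b1 n * poch b2 n) * z ^ n / Nat.factorial n

open Finset Nat Polynomial Real

lemma poch_add (x : ℂ) (k m : ℕ) : poch x (k + m) = poch x k * poch (x + k) m := by
  simp only [poch, prod_range_add, Nat.cast_add, add_assoc]

lemma descPochhammer_smeval_eq_prod (x : ℂ) (k : ℕ) :
    (descPochhammer ℤ k).smeval x = ∏ j ∈ range k, (x - j) := by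
  rw [← aeval_eq_smeval, aeval_def, eval₂_eq_eval_map, descPochhammer_map,
    descPochhammer_eval_eq_prod_range]

lemma poch_eq_descPochhammer_smeval (x : ℂ) (k : ℕ) :
    poch x k = (descPochhammer ℤ k).smeval (x + k - 1) := by
  rw [descPochhammer_smeval_eq_prod, poch, ← prod_range_reflect]
  refine prod_congr rfl fun j hj => ?_
  have := mem_range.mp hj
  rw [Nat.cast_sub (by omega), Nat.cast_sub (by omega)]
  push_cast
  ring

lemma descPochhammer_smeval_neg (x : ℂ) (k : ℕ) :
    (descPochhammer ℤ k).smeval (-x) = (-1) ^ k * poch x k := by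
  rw [descPochhammer_smeval_eq_prod, poch, ← card_range k, ← prod_const, card_range,
    ← prod_mul_distrib]
  exact prod_congr rfl fun j _ => by ring

lemma poch_sub_eq_sum_antidiagonal (β e : ℂ) (s : ℕ) :
    poch (e - β) s = ∑ p ∈ antidiagonal s,
      (-1) ^ p.1 * s.choose p.1 * poch β p.1 * poch (e + p.1) p.2 := by
  rw [poch_eq_descPochhammer_smeval, show e - β + s - 1 = -β + (e + s - 1) by ring,
    Ring.descPochhammer_smeval_add s (Commute.all _ _)]
  refine sum_congr rfl fun p hp => ?_
  rw [descPochhammer_smeval_neg, poch_eq_descPochhammer_smeval (e + p.1),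
    ← mem_antidiagonal.mp hp]
  push_cast
  ring_nf

lemma norm_poch_le (x : ℂ) (n : ℕ) : ‖poch x n‖ ≤ (‖x‖ + 1) ^ n * n ! := by
  rw [poch, norm_prod, ← prod_range_add_one_eq_factorial, Nat.cast_prod, ← card_range n,
    ← prod_const, card_range, ← prod_mul_distrib]
  refine prod_le_prod (fun _ _ => norm_nonneg _) fun i _ => ?_
  calc ‖x + i‖ ≤ ‖x‖ + i := by simpa using norm_add_le x (i : ℂ)
    _ ≤ (‖x‖ + 1) * ((i + 1 : ℕ) : ℝ) := by push_cast; nlinarith [norm_nonneg x]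

lemma pow_mul_prod_le_norm_poch {x : ℂ} {ε : ℝ} (hε : 0 ≤ ε) {f : ℕ → ℝ} (hf : ∀ i, 0 ≤ f i)
    (h : ∀ i, ε * f i ≤ ‖x + i‖) (n : ℕ) : ε ^ n * ∏ i ∈ range n, f i ≤ ‖poch x n‖ := by
  rw [poch, norm_prod, ← card_range n, ← prod_const, card_range, ← prod_mul_distrib]
  exact prod_le_prod (fun i _ => mul_nonneg hε (hf i)) fun i _ => h i

lemma exists_pos_mul_le_norm_add_intCast (x : ℂ) {P : ℤ → Prop} (hx : ∀ m, P m → x + m ≠ 0) :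
    ∃ ε > 0, ∀ m, P m → ε * (|(m : ℝ)| + 1) ≤ ‖x + m‖ := by
  classical
  -- for `|m| > 2 ‖x‖` the constant `1 / 2` works; the finitely many other `m` give a minimum
  set M : ℤ := ⌈2 * ‖x‖⌉
  set f : ℤ → ℝ := fun m => ‖x + m‖ / (|(m : ℝ)| + 1)
  set T := insert (1 / 2) (((Icc (-M) M).filter P).image f)
  have hT : ∀ t ∈ T, 0 < t := by
    simp only [T, mem_insert, mem_image, mem_filter]
    rintro t (rfl | ⟨m, ⟨-, hm⟩, rfl⟩)
    · norm_num
    · exact div_pos (norm_pos_iff.mpr (hx m hm)) (by positivity)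
  refine ⟨T.min' (insert_nonempty _ _), hT _ (min'_mem _ _), fun m hm => ?_⟩
  by_cases hmM : m ∈ Icc (-M) M
  · have : T.min' _ ≤ f m :=
      min'_le _ _ (mem_insert_of_mem (mem_image_of_mem f (mem_filter.mpr ⟨hmM, hm⟩)))
    rwa [le_div_iff₀ (by positivity)] at this
  · have hM : 2 * ‖x‖ + 1 ≤ |(m : ℝ)| := by
      have hm' : M + 1 ≤ |m| := by rw [mem_Icc, ← abs_le] at hmM; omega
      have : ((M + 1 : ℤ) : ℝ) ≤ |(m : ℝ)| := by rw [← Int.cast_abs]; exact_mod_cast hm'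
      push_cast at this
      linarith [Int.le_ceil (2 * ‖x‖)]
    have htri : |(m : ℝ)| ≤ ‖x + m‖ + ‖x‖ := by
      simpa [Complex.norm_intCast] using norm_sub_le (x + m) x
    calc T.min' _ * (|(m : ℝ)| + 1) ≤ 1 / 2 * (|(m : ℝ)| + 1) :=
          mul_le_mul_of_nonneg_right (min'_le _ _ (mem_insert_self _ _)) (by positivity)
      _ ≤ ‖x + m‖ := by linarith

lemma exists_pow_mul_factorial_le_norm_poch {x : ℂ} (hx : ∀ i : ℕ, x + i ≠ 0) :
    ∃ ε > 0, ∀ n, ε ^ n * n ! ≤ ‖poch x n‖ := by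
  obtain ⟨ε, hε, h⟩ := exists_pos_mul_le_norm_add_intCast x (P := fun m => 0 ≤ m)
    fun m hm => by lift m to ℕ using hm; exact_mod_cast hx m
  refine ⟨ε, hε, fun n => ?_⟩
  have := pow_mul_prod_le_norm_poch hε.le (f := fun i => (i + 1 : ℕ)) (fun _ => by positivity)
    (fun i => by simpa using h i i.cast_nonneg) n
  rwa [← Nat.cast_prod, ← factorial_eq_prod_range_add_one] at this

lemma exists_norm_poch_div_poch_le (a : ℂ) {c : ℂ} (hc : ∀ i : ℕ, c + i ≠ 0) :
    ∃ r ≥ 0, ∀ j, ‖poch a j / poch c j‖ ≤ r ^ j := by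
  obtain ⟨ε, hε, h⟩ := exists_pow_mul_factorial_le_norm_poch hc
  refine ⟨(‖a‖ + 1) / ε, by positivity, fun j => ?_⟩
  have hcj : 0 < ‖poch c j‖ := lt_of_lt_of_le (by positivity) (h j)
  rw [norm_div, div_pow, div_le_div_iff₀ hcj (pow_pos hε j)]
  calc ‖poch a j‖ * ε ^ j ≤ (‖a‖ + 1) ^ j * j ! * ε ^ j := by gcongr; exact norm_poch_le a j
    _ = (‖a‖ + 1) ^ j * (ε ^ j * j !) := by ring
    _ ≤ (‖a‖ + 1) ^ j * ‖poch c j‖ := by gcongr; exact h j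

/-- For `d ∉ ℤ`, `‖d - n + j‖ ≥ ε (|j - n| + 1)`, so `ε ^ k * distProd n k ≤ ‖(d - n)_k‖`. -/
def distProd (n k : ℕ) : ℕ := ∏ j ∈ range k, (j.dist n + 1)

lemma distProd_pos (n k : ℕ) : 0 < distProd n k :=
  prod_pos fun _ _ => succ_pos _

lemma prod_range_sub_eq_factorial (k : ℕ) : ∏ j ∈ range k, (k - j) = k ! := by
  rw [factorial_eq_prod_range_add_one, ← prod_range_reflect]
  exact prod_congr rfl fun j hj => by have := mem_range.mp hj; omega

lemma factorial_le_distProd {n k : ℕ} (hk : k ≤ n + 1) : k ! ≤ distProd n k := by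
  rw [← prod_range_sub_eq_factorial]
  exact prod_le_prod' fun j hj => by have := mem_range.mp hj; unfold Nat.dist; omega

lemma factorial_le_two_pow_mul_distProd (n k : ℕ) : k ! ≤ 2 ^ k * distProd n k := by
  rcases le_or_gt k (n + 1) with hk | hk
  · exact (factorial_le_distProd hk).trans (Nat.le_mul_of_pos_left _ (by positivity))
  obtain ⟨p, rfl⟩ : ∃ p, k = (n + 1) + p := ⟨k - (n + 1), by omega⟩
  have hp : p ! ≤ ∏ i ∈ range p, ((n + 1 + i).dist n + 1) :=
    factorial_eq_prod_range_add_one p ▸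
      prod_le_prod' fun i _ => by unfold Nat.dist; omega
  calc (n + 1 + p)! = (n + 1 + p).choose (n + 1) * (n + 1)! * p ! := by
        rw [← choose_mul_factorial_mul_factorial (le_add_right _ _), Nat.add_sub_cancel_left]
    _ ≤ 2 ^ (n + 1 + p) * ((n + 1)! * p !) := by
        rw [mul_assoc]; exact Nat.mul_le_mul_right _ (choose_le_two_pow _ _)
    _ ≤ 2 ^ (n + 1 + p) * distProd n (n + 1 + p) := by
        rw [distProd, prod_range_add]
        exact Nat.mul_le_mul_left _ (Nat.mul_le_mul (factorial_le_distProd le_rfl) hp)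

lemma pow_le_two_pow_mul_distProd {n k : ℕ} (hk : 2 * k ≤ n) : n ^ k ≤ 2 ^ k * distProd n k := by
  rw [distProd, ← card_range k, ← prod_const, ← prod_const, card_range, ← prod_mul_distrib]
  exact prod_le_prod' fun j hj => by have := mem_range.mp hj; unfold Nat.dist; omega

/-- The source of the `n ^ (-N)` decay of the tail. -/
lemma factorial_mul_pow_le_distProd {N n k : ℕ} (hNk : N ≤ k) :
    k ! * n ^ N ≤ (2 * k) ^ N * (2 ^ k * distProd n k) := by
  rcases le_or_gt n (2 * k) with hn | hn
  · rw [mul_comm]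
    exact Nat.mul_le_mul (Nat.pow_le_pow_left hn N) (factorial_le_two_pow_mul_distProd n k)
  calc k ! * n ^ N ≤ k ^ N * k ^ (k - N) * n ^ N := by
        rw [← pow_add, Nat.add_sub_cancel' hNk]
        exact Nat.mul_le_mul_right _ (factorial_le_pow k)
    _ ≤ k ^ N * n ^ (k - N) * n ^ N :=
        Nat.mul_le_mul_right _ (Nat.mul_le_mul_left _ (Nat.pow_le_pow_left (by omega) _))
    _ = k ^ N * n ^ k := by rw [mul_assoc, ← pow_add, Nat.sub_add_cancel hNk]
    _ ≤ (2 * k) ^ N * (2 ^ k * distProd n k) :=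
        Nat.mul_le_mul (Nat.pow_le_pow_left (by omega) N) (pow_le_two_pow_mul_distProd hn.le)

lemma pow_div_distProd_le {L : ℝ} (hL : 0 ≤ L) {N n k : ℕ} (hn : 0 < n) (hNk : N ≤ k) :
    L ^ k / distProd n k ≤ 2 ^ N * (2 ^ (N + 1) * L) ^ k / k ! / n ^ N := by
  have hk : k ! * n ^ N ≤ 2 ^ N * (2 ^ (N + 1)) ^ k * distProd n k :=
    calc k ! * n ^ N ≤ (2 * k) ^ N * (2 ^ k * distProd n k) := factorial_mul_pow_le_distProd hNk
      _ ≤ (2 * 2 ^ k) ^ N * (2 ^ k * distProd n k) := by gcongr; exact k.lt_two_pow_self.le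
      _ = 2 ^ N * (2 ^ (N + 1)) ^ k * distProd n k := by ring
  have hk' : (k ! : ℝ) * n ^ N ≤ 2 ^ N * (2 ^ (N + 1)) ^ k * distProd n k := by exact_mod_cast hk
  have hD : (0 : ℝ) < distProd n k := by exact_mod_cast distProd_pos n k
  have hn' : (0 : ℝ) < n := by exact_mod_cast hn
  rw [div_div, div_le_div_iff₀ hD (by positivity)]
  calc L ^ k * (k ! * n ^ N) ≤ L ^ k * (2 ^ N * (2 ^ (N + 1)) ^ k * distProd n k) := by gcongr
    _ = 2 ^ N * (2 ^ (N + 1) * L) ^ k * distProd n k := by ring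

lemma pow_div_le_div_pow_div {A ε D x : ℝ} (hA : 0 ≤ A) (hε : 0 < ε) (hD : 0 < D) {k : ℕ}
    (h : ε ^ k * D ≤ x) : A ^ k / x ≤ (A / ε) ^ k / D := by
  rw [div_pow, div_div]
  exact div_le_div_of_nonneg_left (by positivity) (by positivity) h

lemma cast_dist_eq_abs_sub (j n : ℕ) : ((j.dist n : ℕ) : ℝ) = |(j : ℝ) - n| := by
  rcases le_total j n with h | h
  · rw [Nat.dist_eq_sub_of_le h, Nat.cast_sub h, abs_of_nonpos (by simpa using h), neg_sub]
  · rw [Nat.dist_eq_sub_of_le_right h, Nat.cast_sub h, abs_of_nonneg (by simpa using h)]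

lemma exists_pow_mul_distProd_le_norm_poch_sub {d : ℂ} (hd : ∀ m : ℤ, d ≠ m) :
    ∃ ε > 0, ∀ n k : ℕ, ε ^ k * distProd n k ≤ ‖poch (d - n) k‖ := by
  obtain ⟨ε, hε, h⟩ := exists_pos_mul_le_norm_add_intCast d (P := fun _ => True)
    fun m _ hm => hd (-m) (by push_cast; linear_combination hm)
  refine ⟨ε, hε, fun n k => ?_⟩
  rw [distProd, Nat.cast_prod]
  refine pow_mul_prod_le_norm_poch hε.le (fun _ => by positivity) (fun j => ?_) k
  have := h (j - n) trivial
  push_cast at this ⊢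
  rwa [cast_dist_eq_abs_sub, show d - n + j = d + (j - n) by ring]

lemma Real.hasSum_pow_div_factorial (x : ℝ) : HasSum (fun n => x ^ n / n !) (exp x) :=
  Real.exp_eq_exp_ℝ ▸ NormedSpace.expSeries_div_hasSum_exp x

lemma hasSum_tsum_row_of_summable {E : Type*} [NormedAddCommGroup E] [CompleteSpace E]
    {f : ℕ × ℕ → E} (hf : Summable f) :
    HasSum (fun k => ∑' m, f (k, m)) (∑' s, ∑ p ∈ antidiagonal s, f p) := by
  have hsigma : Summable fun x => f (HasAntidiagonal.sigmaAntidiagonalEquivProd x) :=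
    HasAntidiagonal.sigmaAntidiagonalEquivProd.summable_iff.mpr hf
  convert hf.hasSum.prod_fiberwise fun k => (hf.prod_factor k).hasSum using 1
  rw [← HasAntidiagonal.sigmaAntidiagonalEquivProd.tsum_eq f, hsigma.tsum_sigma]
  exact tsum_congr fun s => (sum_finset_coe (fun p => f p) _).symm.trans (tsum_fintype _).symm

lemma norm_sub_sum_range_le_of_hasSum {E : Type*} [NormedAddCommGroup E] {f : ℕ → E} {s : E}
    (hf : HasSum f s) {u : ℕ → ℝ} {U : ℝ} (hu : HasSum u U) (hu0 : ∀ k, 0 ≤ u k) {N : ℕ}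
    (hfu : ∀ k, N ≤ k → ‖f k‖ ≤ u k) : ‖s - ∑ k ∈ range N, f k‖ ≤ U := by
  calc ‖s - ∑ k ∈ range N, f k‖ ≤ U - ∑ k ∈ range N, u k :=
        ((hasSum_nat_add_iff' N).mpr hf).norm_le_of_bounded ((hasSum_nat_add_iff' N).mpr hu)
          fun k => hfu _ le_add_self
    _ ≤ U := sub_le_self _ (sum_nonneg fun k _ => hu0 k)

/-- The double series behind the expansion: its `k`-th row sums to `expansionTerm a β c e z k`,
and its `s`-th antidiagonal to the `s`-th term of `₂F₂[a, e - β; c, e; z]` (Chu–Vandermonde). -/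
noncomputable def expansionDoubleTerm (a β c e z : ℂ) (p : ℕ × ℕ) : ℂ :=
  poch β p.1 / poch e p.1 * (-z) ^ p.1 / p.1 ! *
    (poch a (p.1 + p.2) / poch c (p.1 + p.2) * z ^ p.2 / p.2 !)

noncomputable def expansionTerm (a β c e z : ℂ) (k : ℕ) : ℂ :=
  poch a k * poch β k / (poch c k * poch e k) * (-z) ^ k / k ! * F11 (a + k) (c + k) z

lemma tsum_expansionDoubleTerm_row (a β c e z : ℂ) (k : ℕ) :
    ∑' m, expansionDoubleTerm a β c e z (k, m) = expansionTerm a β c e z k := by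
  have hF11 : poch a k / poch c k * F11 (a + k) (c + k) z =
      ∑' m, poch a (k + m) / poch c (k + m) * z ^ m / m ! := by
    rw [F11, ← tsum_mul_left]
    exact tsum_congr fun m => by rw [poch_add, poch_add]; ring
  calc ∑' m, expansionDoubleTerm a β c e z (k, m)
      = poch β k / poch e k * (-z) ^ k / k ! *
          ∑' m, poch a (k + m) / poch c (k + m) * z ^ m / m ! := by rw [← tsum_mul_left]; rfl
    _ = expansionTerm a β c e z k := by rw [← hF11, expansionTerm]; ring

lemma norm_expansionDoubleTerm_le {a β c e z : ℂ} {r R : ℝ}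
    (hr : ∀ j, ‖poch a j / poch c j‖ ≤ r ^ j) (hR : ∀ k, ‖poch β k‖ ≤ R ^ k * k !) (k m : ℕ) :
    ‖expansionDoubleTerm a β c e z (k, m)‖ ≤
      (r * R * ‖z‖) ^ k / ‖poch e k‖ * ((r * ‖z‖) ^ m / m !) := by
  rw [expansionDoubleTerm]
  simp only [norm_mul, norm_div, norm_pow, norm_neg, RCLike.norm_natCast]
  have hk : (k ! : ℝ) ≠ 0 := by positivity
  have hR0 : 0 ≤ R := by simpa using (norm_nonneg _).trans (hR 1)
  have hβ := hR k
  have hac : ‖poch a (k + m)‖ / ‖poch c (k + m)‖ ≤ r ^ (k + m) :=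
    norm_div (poch a _) (poch c _) ▸ hr _
  calc _ ≤ R ^ k * k ! / ‖poch e k‖ * ‖z‖ ^ k / k ! * (r ^ (k + m) * ‖z‖ ^ m / m !) := by
        gcongr
    _ = (r * R * ‖z‖) ^ k / ‖poch e k‖ * ((r * ‖z‖) ^ m / m !) := by
        rw [pow_add]; field_simp; ring

lemma summable_expansionDoubleTerm (a β : ℂ) {c e : ℂ} (z : ℂ) (hc : ∀ i : ℕ, c + i ≠ 0)
    (he : ∀ i : ℕ, e + i ≠ 0) : Summable (expansionDoubleTerm a β c e z) := by
  obtain ⟨r, hr0, hr⟩ := exists_norm_poch_div_poch_le a hc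
  obtain ⟨ε, hε, hεe⟩ := exists_pow_mul_factorial_le_norm_poch he
  set A := r * (‖β‖ + 1) * ‖z‖
  refine Summable.of_norm_bounded ((summable_pow_div_factorial (A / ε)).mul_of_nonneg
    (summable_pow_div_factorial (r * ‖z‖)) (fun _ => by positivity) (fun _ => by positivity))
    fun p => (norm_expansionDoubleTerm_le hr (norm_poch_le β) p.1 p.2).trans ?_
  exact mul_le_mul_of_nonneg_right
    (pow_div_le_div_pow_div (by positivity) hε (by positivity) (hεe p.1)) (by positivity)

lemma sum_antidiagonal_expansionDoubleTerm (a β c : ℂ) {e : ℂ} (z : ℂ) (he : ∀ i : ℕ, e + i ≠ 0)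
    (s : ℕ) : ∑ p ∈ antidiagonal s, expansionDoubleTerm a β c e z p =
      poch a s * poch (e - β) s / (poch c s * poch e s) * z ^ s / s ! := by
  simp only [poch_sub_eq_sum_antidiagonal, mul_sum, sum_mul, sum_div]
  refine sum_congr rfl fun p hp => ?_
  obtain rfl := mem_antidiagonal.mp hp
  have hes : poch e (p.1 + p.2) ≠ 0 := prod_ne_zero_iff.mpr fun i _ => he i
  rw [poch_add] at hes
  have hfact : ∀ j : ℕ, (j ! : ℂ) ≠ 0 := fun j => Nat.cast_ne_zero.mpr (factorial_ne_zero j)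
  have hchoose : ((p.1 + p.2).choose p.1 : ℂ) = (p.1 + p.2)! / (p.1 ! * p.2 !) := by
    rw [eq_div_iff (mul_ne_zero (hfact _) (hfact _)), ← mul_assoc]
    have := choose_mul_factorial_mul_factorial (le_add_right p.1 p.2)
    rw [Nat.add_sub_cancel_left] at this
    exact_mod_cast this
  rw [expansionDoubleTerm, hchoose, poch_add e, pow_add, neg_pow]
  field_simp [hfact, left_ne_zero_of_mul hes, right_ne_zero_of_mul hes]

lemma hasSum_expansionTerm (a β : ℂ) {c e : ℂ} (z : ℂ) (hc : ∀ i : ℕ, c + i ≠ 0)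
    (he : ∀ i : ℕ, e + i ≠ 0) : HasSum (expansionTerm a β c e z) (F22 a (e - β) c e z) := by
  have h := hasSum_tsum_row_of_summable (summable_expansionDoubleTerm a β z hc he)
  simp only [tsum_expansionDoubleTerm_row, sum_antidiagonal_expansionDoubleTerm a β c z he] at h
  exact h

lemma norm_expansionTerm_le {a β c e z : ℂ} {r R : ℝ}
    (hr : ∀ j, ‖poch a j / poch c j‖ ≤ r ^ j) (hR : ∀ k, ‖poch β k‖ ≤ R ^ k * k !) (k : ℕ) :
    ‖expansionTerm a β c e z k‖ ≤ (r * R * ‖z‖) ^ k / ‖poch e k‖ * exp (r * ‖z‖) := by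
  rw [← tsum_expansionDoubleTerm_row]
  exact tsum_of_norm_bounded ((Real.hasSum_pow_div_factorial _).mul_left _)
    (norm_expansionDoubleTerm_le hr hR k)

theorem F22_large_minus_n_general (a b c d : ℂ)
    (hc : ∀ m : ℕ, c ≠ -(m : ℂ)) (hd : ∀ m : ℤ, d ≠ (m : ℂ))
    (z : ℂ) (N : ℕ) :
    ∃ C > (0 : ℝ), ∃ n₀ : ℕ, ∀ n : ℕ, n₀ ≤ n →
      ‖F22 a (b - n) c (d - n) z -
          ∑ k ∈ Finset.range N, poch a k * poch (d - b) k /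
            (poch c k * poch (d - n) k) * (-z) ^ k / Nat.factorial k *
            F11 (a + k) (c + k) z‖
        ≤ C * ((n : ℝ) ^ N)⁻¹ := by
  have hc' : ∀ i : ℕ, c + i ≠ 0 := fun i h => hc i (by linear_combination h)
  obtain ⟨r, hr0, hr⟩ := exists_norm_poch_div_poch_le a hc'
  obtain ⟨ε, hε, hdn⟩ := exists_pow_mul_distProd_le_norm_poch_sub hd
  set A := r * (‖d - b‖ + 1) * ‖z‖
  set L := A / ε
  set K := 2 ^ N * exp (r * ‖z‖)
  refine ⟨K * exp (2 ^ (N + 1) * L), by positivity, 1, fun n hn => ?_⟩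
  have hdn' : ∀ i : ℕ, d - n + i ≠ 0 := fun i h => hd (n - i) (by push_cast; linear_combination h)
  rw [show b - n = (d - n) - (d - b) by ring, ← div_eq_mul_inv]
  refine norm_sub_sum_range_le_of_hasSum (hasSum_expansionTerm a (d - b) z hc' hdn')
    (((Real.hasSum_pow_div_factorial _).mul_left K).div_const (n ^ N))
    (fun k => by positivity) fun k hNk => ?_
  have hD : (0 : ℝ) < distProd n k := by exact_mod_cast distProd_pos n k
  calc ‖expansionTerm a (d - b) c (d - n) z k‖
      ≤ A ^ k / ‖poch (d - n) k‖ * exp (r * ‖z‖) := norm_expansionTerm_le hr (norm_poch_le _) k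
    _ ≤ L ^ k / distProd n k * exp (r * ‖z‖) := by
        gcongr ?_ * _
        exact pow_div_le_div_pow_div (by positivity) hε hD (hdn n k)
    _ ≤ 2 ^ N * (2 ^ (N + 1) * L) ^ k / k ! / n ^ N * exp (r * ‖z‖) := by
        gcongr ?_ * _
        exact pow_div_distProd_le (by positivity) hn hNk
    _ = K * ((2 ^ (N + 1) * L) ^ k / k !) / n ^ N := by ring

/-- Theorem 4.3 of the paper: asymptotic expansion of `₂F₂[a, b−n; c, d−n; z]` as
`n → +∞` through integer values. -/
theorem F22_large_minus_n (a b c d : ℂ)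
    (hc : ∀ m : ℕ, c ≠ -(m : ℂ)) (hd : ∀ m : ℤ, d ≠ (m : ℂ))
    (hbd : ∀ m : ℕ, b - d ≠ (m : ℂ))
    (z : ℂ) (hz : z ≠ 0) (N : ℕ) (hN : 0 < N) :
    ∃ C > (0 : ℝ), ∃ n₀ : ℕ, ∀ n : ℕ, n₀ ≤ n →
      ‖F22 a (b - n) c (d - n) z -
          ∑ k ∈ Finset.range N, poch a k * poch (d - b) k /
            (poch c k * poch (d - n) k) * (-z) ^ k / Nat.factorial k *
            F11 (a + k) (c + k) z‖
        ≤ C * ((n : ℝ) ^ N)⁻¹ :=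
  F22_large_minus_n_general a b c d hc hd z N
end

section
/- Let a, b ∈ ℂ and c, d ∈ ℂ ∖ ℤ, and fix z ∈ ℂ. Then for every positive integer N, ₂F₂[a−n, b; c−n, d−n; z] = Σ_{k=0}^{N−1} ((a−n)_k (b)_k)/((c−n)_k (d−n)_k) · z^k/k! + O(n^{−N}) as n → +∞ through positive integer values; i.e., there exist C > 0 and n₀ ∈ ℕ such that for all integers n ≥ n₀ the difference between the left-hand side and the finite sum is bounded in modulus by C n^{−N}. -/
/-!
Write the `k`-th term of `₂F₂[a−n, b; c−n, d−n; z]` as a product of the ratios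
`(a−n+i)(b+i) z / ((c−n+i)(d−n+i)(i+1))`. Since `c` and `d` stay a fixed distance away from the
integers, each ratio is at most `R / (|n − i| + 1)` for a constant `R`. The first `N` of these
factors contribute `O(n^{-N})` once `n ≥ 2N`, and the remaining ones are dominated by
`(2R)^j / j!` because `∏_{i<j} (|m − i| + 1) ≥ j! / 2^j` for every `m`. Summing the tail against the
exponential series gives the bound.
-/

open Finset Nat

noncomputable def F22Term (a1 a2 b1 b2 z : ℂ) (k : ℕ) : ℂ :=
  poch a1 k * poch a2 k / (poch b1 k * poch b2 k) * z ^ k / Nat.factorial k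

lemma F22Term_eq_prod (a1 a2 b1 b2 z : ℂ) (k : ℕ) :
    F22Term a1 a2 b1 b2 z k =
      ∏ i ∈ range k, (a1 + i) * (a2 + i) * z / ((b1 + i) * (b2 + i) * (i + 1)) := by
  rw [F22Term, ← prod_range_add_one_eq_factorial]
  push_cast
  simp only [poch, prod_div_distrib, prod_mul_distrib, prod_const, card_range]
  ring

lemma norm_F22Term_le {a1 a2 b1 b2 z : ℂ} {R : ℝ} {w : ℕ → ℝ}
    (hratio : ∀ i : ℕ,
      ‖(a1 + i) * (a2 + i) * z / ((b1 + i) * (b2 + i) * (i + 1))‖ ≤ R / w i) (k : ℕ) :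
    ‖F22Term a1 a2 b1 b2 z k‖ ≤ R ^ k / ∏ i ∈ range k, w i := by
  rw [F22Term_eq_prod, norm_prod, ← card_range k, ← prod_const, card_range, ← prod_div_distrib]
  exact prod_le_prod (fun _ _ => norm_nonneg _) fun i _ => hratio i

lemma norm_tsum_sub_sum_range_le {E : Type*} [NormedAddCommGroup E] [CompleteSpace E]
    {f : ℕ → E} {g : ℕ → ℝ} {s : ℝ} (N : ℕ) (hg : HasSum g s) (hfg : ∀ j, ‖f (N + j)‖ ≤ g j) :
    ‖∑' k, f k - ∑ k ∈ range N, f k‖ ≤ s := by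
  have hfg' : ∀ j, ‖f (j + N)‖ ≤ g j := fun j => add_comm j N ▸ hfg j
  have hf : Summable f := (summable_nat_add_iff N).1 (hg.summable.of_norm_bounded hfg')
  rw [← hf.sum_add_tsum_nat_add N, add_sub_cancel_left]
  exact tsum_of_norm_bounded hg hfg'

lemma factorial_le_prod_range_dist_add_one {m j : ℕ} (hj : j ≤ m + 1) :
    j ! ≤ ∏ i ∈ range j, (m.dist i + 1) := by
  rw [← prod_range_add_one_eq_factorial, ← prod_range_reflect]
  refine prod_le_prod' fun i hi => ?_
  rw [Nat.dist_eq_sub_of_le_right (by grind)]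
  grind

lemma factorial_le_two_pow_mul_prod_range_dist_add_one (m j : ℕ) :
    j ! ≤ 2 ^ j * ∏ i ∈ range j, (m.dist i + 1) := by
  rcases le_or_gt j (m + 1) with hj | hj
  · exact (factorial_le_prod_range_dist_add_one hj).trans (Nat.le_mul_of_pos_left _ (by positivity))
  obtain ⟨k, rfl⟩ := Nat.exists_eq_add_of_le hj.le
  have hnear := factorial_le_prod_range_dist_add_one (le_refl (m + 1))
  have hfar : k ! ≤ ∏ i ∈ range k, (m.dist (m + 1 + i) + 1) := by
    rw [← prod_range_add_one_eq_factorial]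
    refine prod_le_prod' fun i _ => ?_
    rw [Nat.dist_eq_sub_of_le (by omega)]
    omega
  calc (m + 1 + k)! = (m + 1 + k).choose k * ((m + 1)! * k !) := by
        rw [← mul_assoc, add_choose_mul_factorial_mul_factorial]
    _ ≤ 2 ^ (m + 1 + k) * ((m + 1)! * k !) := Nat.mul_le_mul_right _ (choose_le_two_pow _ _)
    _ ≤ _ := by
        rw [prod_range_add]
        gcongr

lemma pow_mul_factorial_le_two_pow_mul_prod_range_dist_add_one {N n : ℕ} (hn : 2 * N ≤ n)
    (j : ℕ) : n ^ N * j ! ≤ 2 ^ (N + j) * ∏ i ∈ range (N + j), (n.dist i + 1) := by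
  have hnear : n ^ N ≤ 2 ^ N * ∏ i ∈ range N, (n.dist i + 1) := by
    calc n ^ N = ∏ _i ∈ range N, n := by rw [prod_const, card_range]
      _ ≤ ∏ i ∈ range N, 2 * (n.dist i + 1) := prod_le_prod' fun i hi => by
          rw [Nat.dist_eq_sub_of_le_right (by grind)]
          grind
      _ = _ := by rw [prod_mul_distrib, prod_const, card_range]
  have hfar : j ! ≤ 2 ^ j * ∏ i ∈ range j, (n.dist (N + i) + 1) := by
    obtain ⟨m, rfl⟩ : ∃ m, n = m + N := ⟨n - N, by omega⟩
    simpa only [add_comm N, Nat.dist_add_add_right] using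
      factorial_le_two_pow_mul_prod_range_dist_add_one m j
  rw [prod_range_add, pow_add]
  calc n ^ N * j ! ≤ (2 ^ N * ∏ i ∈ range N, (n.dist i + 1)) *
        (2 ^ j * ∏ i ∈ range j, (n.dist (N + i) + 1)) := Nat.mul_le_mul hnear hfar
    _ = _ := by ring

lemma Nat.cast_dist (n i : ℕ) : (n.dist i : ℝ) = |(n : ℝ) - i| := by
  rcases le_total i n with h | h
  · rw [Nat.dist_eq_sub_of_le_right h, Nat.cast_sub h,
      abs_of_nonneg (sub_nonneg.2 (by exact_mod_cast h))]
  · rw [Nat.dist_eq_sub_of_le h, Nat.cast_sub h,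
      abs_of_nonpos (sub_nonpos.2 (by exact_mod_cast h)), neg_sub]

lemma le_div_mul_of_le {r δ x : ℝ} (hr : 0 ≤ r) (hδ : 0 < δ) (hx : δ ≤ x) : r ≤ r / δ * x := by
  calc r = r / δ * δ := (div_mul_cancel₀ r hδ.ne').symm
    _ ≤ r / δ * x := by gcongr

lemma exists_pos_le_norm_sub_intCast {c : ℂ} (hc : ∀ m : ℤ, c ≠ m) :
    ∃ δ > 0, ∀ m : ℤ, δ ≤ ‖c - m‖ := by
  have hclosed : IsClosed (Set.range ((↑) : ℤ → ℂ)) :=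
    (Complex.isometry_ofReal.isClosedEmbedding.comp Int.isClosedEmbedding_coe_real).isClosed_range
  obtain ⟨δ, hδ, hball⟩ :=
    Metric.isOpen_iff.1 hclosed.isOpen_compl c (by rintro ⟨m, rfl⟩; exact hc m rfl)
  refine ⟨δ, hδ, fun m => not_lt.1 fun h => hball ?_ ⟨m, rfl⟩⟩
  rwa [Metric.mem_ball, _root_.dist_comm, dist_eq_norm]

lemma exists_norm_shifted_ratio_le (a b z : ℂ) {c d : ℂ} (hc : ∀ m : ℤ, c ≠ m)
    (hd : ∀ m : ℤ, d ≠ m) :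
    ∃ R > 0, ∀ n i : ℕ, ‖(a - n + i) * (b + i) * z / ((c - n + i) * (d - n + i) * (i + 1))‖ ≤
      R / ((n.dist i : ℝ) + 1) := by
  obtain ⟨δc, hδc, hcδ⟩ := exists_pos_le_norm_sub_intCast hc
  obtain ⟨δd, hδd, hdδ⟩ := exists_pos_le_norm_sub_intCast hd
  set M := 1 + ‖a - c‖ / δc
  set K := 1 + (‖d‖ + 1) / δd
  refine ⟨M * (‖b‖ + 1) * (‖z‖ + 1) * K, by positivity, fun n i => ?_⟩
  have hshift (e : ℂ) : e - n + i = e - ((n - i : ℤ) : ℂ) := by push_cast; ring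
  have hcn : δc ≤ ‖c - n + i‖ := hshift c ▸ hcδ _
  have hdn : δd ≤ ‖d - n + i‖ := hshift d ▸ hdδ _
  have ha : ‖a - n + i‖ ≤ M * ‖c - n + i‖ := calc
    ‖a - n + i‖ ≤ ‖c - n + i‖ + ‖a - c‖ := by
      rw [show a - n + i = (c - n + i) + (a - c) by ring]; exact norm_add_le _ _
    _ ≤ ‖c - n + i‖ + ‖a - c‖ / δc * ‖c - n + i‖ := by
      gcongr; exact le_div_mul_of_le (norm_nonneg _) hδc hcn
    _ = _ := by ring
  have hb : ‖b + i‖ ≤ (‖b‖ + 1) * (i + 1) := calc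
    ‖b + i‖ ≤ ‖b‖ + i := (norm_add_le _ _).trans_eq (by rw [Complex.norm_natCast])
    _ ≤ (‖b‖ + 1) * (i + 1) := by nlinarith [norm_nonneg b, (i.cast_nonneg : (0 : ℝ) ≤ i)]
  have hdist : (n.dist i : ℝ) + 1 ≤ K * ‖d - n + i‖ := calc
    (n.dist i : ℝ) + 1 ≤ ‖d - n + i‖ + (‖d‖ + 1) := by
      have : (n.dist i : ℝ) = ‖d - (d - n + i)‖ := by
        rw [Nat.cast_dist, show d - (d - n + i) = (((n : ℝ) - i : ℝ) : ℂ) by push_cast; ring,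
          Complex.norm_real, Real.norm_eq_abs]
      linarith [norm_sub_le d (d - n + i)]
    _ ≤ ‖d - n + i‖ + (‖d‖ + 1) / δd * ‖d - n + i‖ := by
      gcongr; exact le_div_mul_of_le (by positivity) hδd hdn
    _ = _ := by ring
  have hone : ‖(i : ℂ) + 1‖ = i + 1 := by exact_mod_cast Complex.norm_natCast (i + 1)
  have hden : 0 < ‖c - n + i‖ * ‖d - n + i‖ * (i + 1) :=
    mul_pos (mul_pos (hδc.trans_le hcn) (hδd.trans_le hdn)) (by positivity)
  rw [norm_div, norm_mul, norm_mul, norm_mul, norm_mul, hone, le_div_iff₀ (by positivity),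
    div_mul_eq_mul_div, div_le_iff₀ hden]
  calc ‖a - n + i‖ * ‖b + i‖ * ‖z‖ * ((n.dist i : ℝ) + 1)
      ≤ (M * ‖c - n + i‖) * ((‖b‖ + 1) * (i + 1)) * (‖z‖ + 1) * (K * ‖d - n + i‖) := by
        gcongr; linarith
    _ = _ := by ring

lemma norm_F22Term_shift_add_le {a b c d z : ℂ} {R : ℝ} {N n : ℕ} (hR : 0 ≤ R)
    (hratio : ∀ i : ℕ, ‖(a - n + i) * (b + i) * z / ((c - n + i) * (d - n + i) * (i + 1))‖ ≤
      R / ((n.dist i : ℝ) + 1))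
    (hn : 2 * N ≤ n) (j : ℕ) :
    ‖F22Term (a - n) b (c - n) (d - n) z (N + j)‖ ≤
      (2 * R) ^ N * ((n : ℝ) ^ N)⁻¹ * ((2 * R) ^ j / j !) := by
  have hprod : (n : ℝ) ^ N * j ! / 2 ^ (N + j) ≤
      ∏ i ∈ range (N + j), ((n.dist i : ℝ) + 1) := by
    rw [div_le_iff₀ (by positivity)]
    exact_mod_cast (pow_mul_factorial_le_two_pow_mul_prod_range_dist_add_one hn j).trans_eq
      (mul_comm _ _)
  have hnN : (0 : ℝ) < n ^ N := by
    rcases N.eq_zero_or_pos with rfl | hN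
    · simp
    · exact pow_pos (by exact_mod_cast (by omega : 0 < n)) _
  calc _ ≤ R ^ (N + j) / ∏ i ∈ range (N + j), ((n.dist i : ℝ) + 1) :=
        norm_F22Term_le hratio _
    _ ≤ R ^ (N + j) / ((n : ℝ) ^ N * j ! / 2 ^ (N + j)) :=
        div_le_div_of_nonneg_left (by positivity)
          (div_pos (mul_pos hnN (by positivity)) (by positivity)) hprod
    _ = _ := by
        field_simp
        ring

theorem F22_shifted_denominators_general (a b c d : ℂ)
    (hc : ∀ m : ℤ, c ≠ (m : ℂ)) (hd : ∀ m : ℤ, d ≠ (m : ℂ))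
    (z : ℂ) (N : ℕ) :
    ∃ C > (0 : ℝ), ∃ n₀ : ℕ, ∀ n : ℕ, n₀ ≤ n →
      ‖F22 (a - n) b (c - n) (d - n) z -
          ∑ k ∈ Finset.range N, poch (a - n) k * poch b k /
            (poch (c - n) k * poch (d - n) k) * z ^ k / Nat.factorial k‖
        ≤ C * ((n : ℝ) ^ N)⁻¹ := by
  obtain ⟨R, hR, hratio⟩ := exists_norm_shifted_ratio_le a b z hc hd
  refine ⟨(2 * R) ^ N * Real.exp (2 * R), by positivity, 2 * N, fun n hn => ?_⟩
  have hexp : HasSum (fun j : ℕ => (2 * R) ^ N * ((n : ℝ) ^ N)⁻¹ * ((2 * R) ^ j / j !))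
      ((2 * R) ^ N * ((n : ℝ) ^ N)⁻¹ * Real.exp (2 * R)) := by
    rw [Real.exp_eq_exp_ℝ]
    exact (NormedSpace.expSeries_div_hasSum_exp (2 * R)).mul_left _
  calc _ ≤ _ := norm_tsum_sub_sum_range_le (f := F22Term (a - n) b (c - n) (d - n) z) N hexp
        (norm_F22Term_shift_add_le hR.le (hratio n) hn)
    _ = _ := by ring

/-- Theorem 4.5(1) of the paper: asymptotic expansion of `₂F₂[a−n, b; c−n, d−n; z]`
as `n → +∞` through integer values. -/
theorem F22_shifted_denominators (a b c d : ℂ)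
    (hc : ∀ m : ℤ, c ≠ (m : ℂ)) (hd : ∀ m : ℤ, d ≠ (m : ℂ))
    (z : ℂ) (N : ℕ) (hN : 0 < N) :
    ∃ C > (0 : ℝ), ∃ n₀ : ℕ, ∀ n : ℕ, n₀ ≤ n →
      ‖F22 (a - n) b (c - n) (d - n) z -
          ∑ k ∈ Finset.range N, poch (a - n) k * poch b k /
            (poch (c - n) k * poch (d - n) k) * z ^ k / Nat.factorial k‖
        ≤ C * ((n : ℝ) ^ N)⁻¹ :=
  F22_shifted_denominators_general a b c d hc hd z N
end
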